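/- Let G be a finite 2-group with d(G') ≤ 2, C_G(G'/(G')^2) = G, and (G')^2 ≠ 1. Then [G, G^2] = (G')^2, and moreover [G^2, G^2] ≤ (G')^4. -/

import Mathlib

/-!
Everything rests on `⁅a, b²⁆ = ⁅a, b⁆² ⁅⁅a, b⁆⁻¹, b⁆`. It turns `[G, G'] ≤ (G')²` into
`[G, G²] ≤ (G')²`; the reverse inclusion holds in every group, since `G' ≤ G²` and squaring is
multiplicative modulo commutators. For the second claim it suffices that `[G, (G')²]` and the
squares of elements of `(G')²` lie in `(G')⁴`. Both hold modulo `γ₅`: there `γ₄ ⊇ [G', G']` is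
central, so `⁅x², y²⁆ ≡ ⁅x, y⁆⁴` for `x, y ∈ G'`, and `[γ₃, G'] ≤ γ₅` by the three subgroups lemma.
Hence `γ₄ ≤ (G')⁴ γ₅`, so `γ₄ ≤ (G')⁴` by nilpotency, and the congruences become memberships.

Here `γᵢ₊₁ = (⊤ : Subgroup G).lowerCentralSeries i`.
-/

/-- The subgroup generated by `n`-th powers of elements of `H`. -/
def subPow {G : Type*} [Group G] (H : Subgroup G) (n : ℕ) : Subgroup G :=
  Subgroup.closure ((· ^ n) '' (H : Set G))

open Subgroup
open scoped commutatorElement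

section Identities

variable {G : Type*} [Group G]

theorem commutatorElement_sq_right (a b : G) : ⁅a, b ^ 2⁆ = ⁅a, b⁆ ^ 2 * ⁅⁅a, b⁆⁻¹, b⁆ := by
  simp only [sq]
  group

theorem mul_sq_eq_sq_mul_commutatorElement_mul_sq (a b : G) :
    (a * b) ^ 2 = a ^ 2 * ⁅a⁻¹, b⁆ * b ^ 2 := by
  simp only [sq]
  group

theorem commutatorElement_eq_sq_mul_sq_mul_sq (a b : G) :
    ⁅a, b⁆ = a ^ 2 * (a⁻¹ * b) ^ 2 * (b⁻¹) ^ 2 := by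
  simp only [sq]
  group

theorem sq_commutatorElement (a b : G) : ⁅a, b⁆ ^ 2 = ⁅a, b ^ 2⁆ * ⁅b, ⁅a, b⁆⁻¹⁆ := by
  simp only [sq]
  group

theorem commutatorElement_sq_sq_of_commute {x y : G} (hx : Commute x ⁅x, y⁆)
    (hy : Commute y ⁅x, y⁆) : ⁅x ^ 2, y ^ 2⁆ = ⁅x, y⁆ ^ 4 := by
  have hxy : ⁅x ^ 2, y⁆ = ⁅x, y⁆ ^ 2 :=
    calc ⁅x ^ 2, y⁆ = x * ⁅x, y⁆ * x⁻¹ * ⁅x, y⁆ := by simp only [sq]; group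
      _ = ⁅x, y⁆ ^ 2 := by rw [hx.mul_inv_cancel, sq]
  calc ⁅x ^ 2, y ^ 2⁆ = ⁅x ^ 2, y⁆ * (y * ⁅x ^ 2, y⁆ * y⁻¹) := by simp only [sq]; group
    _ = ⁅x, y⁆ ^ 4 := by rw [hxy, (hy.pow_right 2).mul_inv_cancel, ← pow_add]

end Identities

namespace Subgroup

variable {G : Type*} [Group G]

theorem commutatorElement_mem_of_mem_closure {N : Subgroup G} [N.Normal] {T : Set G} {a b : G}
    (h : ∀ t ∈ T, ⁅a, t⁆ ∈ N) (hb : b ∈ closure T) : ⁅a, b⁆ ∈ N := by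
  induction hb using closure_induction with
  | mem t ht => exact h t ht
  | one => simp
  | mul x y _ _ hx hy =>
    rw [commutatorElement_mul_right_eq_mul_conj, mul_assoc _ x, mul_assoc]
    exact N.mul_mem hx (‹N.Normal›.conj_mem _ hy x)
  | inv x _ hx =>
    rw [commutatorElement_inv_right, ← commutatorElement_inv]
    simpa using ‹N.Normal›.conj_mem _ (N.inv_mem hx) x⁻¹

theorem commutator_closure_right_le {N : Subgroup G} [N.Normal] {H : Subgroup G} {T : Set G}
    (h : ∀ a ∈ H, ∀ t ∈ T, ⁅a, t⁆ ∈ N) : ⁅H, closure T⁆ ≤ N :=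
  commutator_le.2 fun a ha _ hb => commutatorElement_mem_of_mem_closure (h a ha) hb

theorem commutator_closure_closure_le {N : Subgroup G} [N.Normal] {S T : Set G}
    (h : ∀ s ∈ S, ∀ t ∈ T, ⁅s, t⁆ ∈ N) : ⁅closure S, closure T⁆ ≤ N := by
  refine commutator_closure_right_le fun a ha t ht => ?_
  rw [← commutatorElement_inv]
  refine N.inv_mem (commutatorElement_mem_of_mem_closure (fun s hs => ?_) ha)
  rw [← commutatorElement_inv]
  exact N.inv_mem (h s hs t ht)

/-- The three subgroups lemma, modulo a normal subgroup. -/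
theorem commutator_commutator_le_of_rotate {A B C N : Subgroup G} [N.Normal]
    (h1 : ⁅⁅B, C⁆, A⁆ ≤ N) (h2 : ⁅⁅C, A⁆, B⁆ ≤ N) : ⁅⁅A, B⁆, C⁆ ≤ N := by
  simp only [← QuotientGroup.ker_mk' N, ← map_eq_bot_iff, map_commutator] at *
  exact commutator_commutator_eq_bot_of_rotate h1 h2

theorem commutator_lowerCentralSeries_commutator_le (i : ℕ) :
    ⁅lowerCentralSeries (⊤ : Subgroup G) i, _root_.commutator G⁆ ≤
      lowerCentralSeries (⊤ : Subgroup G) (i + 2) := by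
  rw [_root_.commutator_def, commutator_comm]
  refine commutator_commutator_le_of_rotate ?_ le_rfl
  rw [commutator_comm ⊤]
  rfl

theorem lowerCentralSeries_eq_bot_of_le_succ [Group.IsNilpotent G] {k : ℕ}
    (h : lowerCentralSeries (⊤ : Subgroup G) k ≤ lowerCentralSeries ⊤ (k + 1)) :
    lowerCentralSeries (⊤ : Subgroup G) k = ⊥ := by
  have hstable : ∀ m, lowerCentralSeries (⊤ : Subgroup G) k ≤ lowerCentralSeries ⊤ (k + m) := by
    intro m
    induction m with
    | zero => rfl
    | succ m ih => exact h.trans (commutator_mono ih le_rfl)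
  obtain ⟨n, hn⟩ := nilpotent_iff_lowerCentralSeries.1 ‹Group.IsNilpotent G›
  exact le_bot_iff.1 <| (hstable n).trans <|
    (lowerCentralSeries_antitone ⊤ (Nat.le_add_left n k)).trans hn.le

theorem lowerCentralSeries_le_of_le_sup [Group.IsNilpotent G] {N : Subgroup G} [N.Normal] {k : ℕ}
    (h : lowerCentralSeries (⊤ : Subgroup G) k ≤ N ⊔ lowerCentralSeries ⊤ (k + 1)) :
    lowerCentralSeries (⊤ : Subgroup G) k ≤ N := by
  have hmap : ∀ n, (lowerCentralSeries ⊤ n).map (QuotientGroup.mk' N) = lowerCentralSeries ⊤ n :=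
    fun n => by rw [map_lowerCentralSeries, ← MonoidHom.range_eq_map, QuotientGroup.range_mk']
  rw [← QuotientGroup.ker_mk' N, ← map_eq_bot_iff, hmap]
  apply lowerCentralSeries_eq_bot_of_le_succ
  rw [← hmap, ← hmap]
  simpa [map_sup] using map_mono (f := QuotientGroup.mk' N) h

end Subgroup

section Powers

variable {G : Type*} [Group G]

theorem mem_subPow {H : Subgroup G} {x : G} (hx : x ∈ H) (n : ℕ) : x ^ n ∈ subPow H n :=
  subset_closure ⟨x, hx, rfl⟩

theorem subPow_le {H K : Subgroup G} {n : ℕ} (h : ∀ x ∈ H, x ^ n ∈ K) : subPow H n ≤ K :=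
  (closure_le K).2 <| by rintro _ ⟨x, hx, rfl⟩; exact h x hx

instance subPow_normal (H : Subgroup G) [H.Normal] (n : ℕ) : (subPow H n).Normal := by
  refine ⟨fun x hx g => ?_⟩
  have hconj : (subPow H n).map (MulAut.conj g).toMonoidHom ≤ subPow H n := by
    change (Subgroup.closure _).map _ ≤ _
    rw [MonoidHom.map_closure, closure_le]
    rintro _ ⟨_, ⟨y, hy, rfl⟩, rfl⟩
    simpa using mem_subPow (‹H.Normal›.conj_mem y hy g) n
  exact hconj ⟨x, hx, rfl⟩

theorem subPow_closure_two_le {S : Set G} {N : Subgroup G}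
    (hcomm : ⁅closure S, closure S⁆ ≤ N) (hsq : ∀ s ∈ S, s ^ 2 ∈ N) :
    subPow (closure S) 2 ≤ N := by
  refine subPow_le fun k hk => ?_
  induction hk using closure_induction with
  | mem s hs => exact hsq s hs
  | one => simp
  | mul u v hu hv pu pv =>
    rw [mul_sq_eq_sq_mul_commutatorElement_mul_sq]
    exact mul_mem (mul_mem pu (hcomm (commutator_mem_commutator (inv_mem hu) hv))) pv
  | inv u _ pu => simpa using inv_mem pu

theorem commutator_le_subPow_top_two : commutator G ≤ subPow (⊤ : Subgroup G) 2 := by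
  rw [commutator_eq_closure, closure_le]
  rintro _ ⟨a, b, rfl⟩
  rw [commutatorElement_eq_sq_mul_sq_mul_sq]
  exact mul_mem (mul_mem (mem_subPow (mem_top a) 2) (mem_subPow (mem_top _) 2))
    (mem_subPow (mem_top _) 2)

theorem subPow_commutator_two_le : subPow (commutator G) 2 ≤ ⁅(⊤ : Subgroup G), subPow ⊤ 2⁆ := by
  rw [commutator_eq_closure]
  refine subPow_closure_two_le (commutator_mono le_top ?_) ?_
  · rw [← commutator_eq_closure]
    exact commutator_le_subPow_top_two
  · rintro _ ⟨a, b, rfl⟩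
    rw [sq_commutatorElement]
    have hab : ⁅a, b⁆ ∈ commutator G := commutator_mem_commutator (mem_top a) (mem_top b)
    exact mul_mem (commutator_mem_commutator (mem_top a) (mem_subPow (mem_top b) 2))
      (commutator_mem_commutator (mem_top b) (commutator_le_subPow_top_two (inv_mem hab)))

end Powers

section CommutatorSquares

variable {G : Type*} [Group G]

theorem commutator_subPow_commutator_two_le_sup :
    ⁅subPow (commutator G) 2, subPow (commutator G) 2⁆ ≤
      subPow (commutator G) 4 ⊔ (⊤ : Subgroup G).lowerCentralSeries 4 := by
  refine commutator_closure_closure_le ?_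
  rintro _ ⟨x, hx, rfl⟩ _ ⟨y, hy, rfl⟩
  let π := QuotientGroup.mk' ((⊤ : Subgroup G).lowerCentralSeries 4)
  have hxy : ⁅x, y⁆ ∈ (⊤ : Subgroup G).lowerCentralSeries 3 :=
    commutator_lowerCentralSeries_commutator_le 1 (commutator_mem_commutator hx hy)
  have hcentral : ∀ z, Commute (π z) ⁅π x, π y⁆ := fun z => by
    rw [← commutatorElement_eq_one_iff_commute, ← map_commutatorElement, ← map_commutatorElement,
      ← MonoidHom.mem_ker, QuotientGroup.ker_mk', ← commutatorElement_inv]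
    exact inv_mem (commutator_mem_commutator hxy (mem_top z))
  have hmod : π ⁅x ^ 2, y ^ 2⁆ = π (⁅x, y⁆ ^ 4) := by
    simp only [map_commutatorElement, map_pow]
    exact commutatorElement_sq_sq_of_commute (hcentral x) (hcentral y)
  rw [← QuotientGroup.ker_mk' ((⊤ : Subgroup G).lowerCentralSeries 4), ← comap_map_eq, mem_comap,
    hmod]
  exact mem_map_of_mem _ (mem_subPow (commutator_mem_commutator (mem_top x) (mem_top y)) 4)

theorem subPow_subPow_commutator_two_le_sup :
    subPow (subPow (commutator G) 2) 2 ≤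
      subPow (commutator G) 4 ⊔ (⊤ : Subgroup G).lowerCentralSeries 4 := by
  refine subPow_closure_two_le commutator_subPow_commutator_two_le_sup ?_
  rintro _ ⟨x, hx, rfl⟩
  rw [← pow_mul]
  exact mem_sup_left (mem_subPow hx 4)

theorem commutator_top_subPow_top_two_le
    (hcent : ⁅(⊤ : Subgroup G), commutator G⁆ ≤ subPow (commutator G) 2) :
    ⁅(⊤ : Subgroup G), subPow ⊤ 2⁆ ≤ subPow (commutator G) 2 := by
  refine commutator_closure_right_le ?_
  rintro g - _ ⟨y, -, rfl⟩
  have hgy : ⁅g, y⁆ ∈ commutator G := commutator_mem_commutator (mem_top g) (mem_top y)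
  rw [commutatorElement_sq_right, ← commutatorElement_inv y ⁅g, y⁆⁻¹]
  exact mul_mem (mem_subPow hgy 2)
    (inv_mem (hcent (commutator_mem_commutator (mem_top y) (inv_mem hgy))))

theorem commutator_top_subPow_commutator_two_le_sup
    (hcent : ⁅(⊤ : Subgroup G), commutator G⁆ ≤ subPow (commutator G) 2) :
    ⁅(⊤ : Subgroup G), subPow (commutator G) 2⁆ ≤
      subPow (commutator G) 4 ⊔ (⊤ : Subgroup G).lowerCentralSeries 4 := by
  refine commutator_closure_right_le ?_
  rintro g - _ ⟨x, hx, rfl⟩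
  have hgx : ⁅g, x⁆ ∈ (⊤ : Subgroup G).lowerCentralSeries 2 := by
    rw [← commutatorElement_inv]
    exact inv_mem (commutator_mem_commutator hx (mem_top g))
  rw [commutatorElement_sq_right]
  refine mul_mem (subPow_subPow_commutator_two_le_sup ?_) (mem_sup_right ?_)
  · exact mem_subPow (hcent (commutator_mem_commutator (mem_top g) hx)) 2
  · exact commutator_lowerCentralSeries_commutator_le 2
      (commutator_mem_commutator (inv_mem hgx) hx)

theorem lowerCentralSeries_three_le_subPow_commutator [Group.IsNilpotent G]
    (hcent : ⁅(⊤ : Subgroup G), commutator G⁆ ≤ subPow (commutator G) 2) :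
    (⊤ : Subgroup G).lowerCentralSeries 3 ≤ subPow (commutator G) 4 :=
  lowerCentralSeries_le_of_le_sup <|
    calc (⊤ : Subgroup G).lowerCentralSeries 3
        = ⁅⊤, (⊤ : Subgroup G).lowerCentralSeries 2⁆ := commutator_comm _ _
      _ ≤ ⁅⊤, subPow (commutator G) 2⁆ :=
        commutator_mono le_rfl ((commutator_comm _ _).trans_le hcent)
      _ ≤ _ := commutator_top_subPow_commutator_two_le_sup hcent

end CommutatorSquares

theorem commutator_subPow_top_two_le {G : Type*} [Group G] {K N : Subgroup G} [N.Normal]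
    (hK : ⁅(⊤ : Subgroup G), subPow ⊤ 2⁆ ≤ K) (hsq : subPow K 2 ≤ N)
    (hKN : ⁅(⊤ : Subgroup G), K⁆ ≤ N) :
    ⁅subPow (⊤ : Subgroup G) 2, subPow ⊤ 2⁆ ≤ N := by
  refine commutator_closure_right_le ?_
  rintro a ha _ ⟨b, -, rfl⟩
  have hab : ⁅a, b⁆ ∈ K := hK <| by
    rw [commutator_comm]
    exact commutator_mem_commutator ha (mem_top b)
  rw [commutatorElement_sq_right, ← commutatorElement_inv b ⁅a, b⁆⁻¹]
  exact mul_mem (hsq (mem_subPow hab 2))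
    (inv_mem (hKN (commutator_mem_commutator (mem_top b) (inv_mem hab))))

theorem two_group_commutator_squares_general
    {G : Type*} [Group G] [Finite G] (hG : IsPGroup 2 G)
    (hcent : ⁅(⊤ : Subgroup G), commutator G⁆ ≤ subPow (commutator G) 2) :
    ⁅(⊤ : Subgroup G), subPow ⊤ 2⁆ = subPow (commutator G) 2 ∧
      ⁅subPow (⊤ : Subgroup G) 2, subPow (⊤ : Subgroup G) 2⁆ ≤
        subPow (commutator G) 4 := by
  have := hG.isNilpotent
  have hA := commutator_top_subPow_top_two_le hcent
  have hM : subPow (commutator G) 4 ⊔ (⊤ : Subgroup G).lowerCentralSeries 4 =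
      subPow (commutator G) 4 :=
    sup_eq_left.2 <| (Subgroup.lowerCentralSeries_antitone ⊤ (by norm_num)).trans
      (lowerCentralSeries_three_le_subPow_commutator hcent)
  refine ⟨hA.antisymm subPow_commutator_two_le, commutator_subPow_top_two_le hA ?_ ?_⟩
  · exact hM ▸ subPow_subPow_commutator_two_le_sup
  · exact hM ▸ commutator_top_subPow_commutator_two_le_sup hcent

/-- Let `G` be a finite `2`-group with `d(G') ≤ 2`, `C_G(G'/(G')²) = G`
(i.e. `[G, G'] ≤ (G')²`) and `(G')² ≠ 1`. Then `[G, G²] = (G')²` and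
`[G², G²] ≤ (G')⁴`. -/
theorem two_group_commutator_squares
    {G : Type*} [Group G] [Finite G] (hG : IsPGroup 2 G)
    (hgen : ∃ a b : G, commutator G = Subgroup.closure {a, b})
    (hcent : ⁅(⊤ : Subgroup G), commutator G⁆ ≤ subPow (commutator G) 2)
    (hnt : subPow (commutator G) 2 ≠ ⊥) :
    ⁅(⊤ : Subgroup G), subPow ⊤ 2⁆ = subPow (commutator G) 2 ∧
      ⁅subPow (⊤ : Subgroup G) 2, subPow (⊤ : Subgroup G) 2⁆ ≤
        subPow (commutator G) 4 :=
  two_group_commutator_squares_general hG hcent
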